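/- arXiv:2208.11365 — 2 statements merged into one kernel-verified Lean document; each statement's English description precedes it below -/
import Mathlib

section
/- Let p be a prime, K a field of characteristic p, D a derivation on K, and g ∈ K with g ≠ 0. Then the logarithmic derivative h = D(g)/g satisfies D^{p-1}(h) + h^p = D^p(g)/g. In particular, if D^p = 0, every logarithmic derivative D(g)/g is a solution of the homogeneous p-Riccati equation D^{p-1}(f) + f^p = 0. -/
/-!
With `h = D g / g`, multiplication by `g` conjugates the operator `E = D + h` into `D`, so
`g · E^p(1) = D^p(g)`. Jacobson's formula in the ring of additive endomorphisms of `K` gives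
`(h + D)^p = h^p + D^p + ad(D)^{p-1}(h) = h^p + D^p + D^{p-1}(h)`, and evaluating at `1`
(where `D^p` vanishes) yields `E^p(1) = h^p + D^{p-1}(h)`.

Jacobson's formula, for `a` commuting with every `ad(b)^i(a)`, comes from differentiating
`F^p`, `F = aX + b`, with respect to `X`: the derivative is `∑ F^i a F^{p-1-i} = ad(F)^{p-1}(a)`,
a constant, and in characteristic `p` a polynomial of degree `≤ p` with constant derivative
has no coefficients strictly between degree `1` and degree `p`. Setting `X = 1` gives the
formula.
-/

open Polynomial Finset

theorem Polynomial.derivative_pow_eq_sum {S : Type*} [Semiring S] (P : S[X]) (n : ℕ) :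
    derivative (P ^ n) = ∑ i ∈ range n, P ^ i * derivative P * P ^ (n - 1 - i) := by
  induction n with
  | zero => simp
  | succ n ih =>
    rw [pow_succ', derivative_mul, ih, mul_sum, sum_range_succ', pow_zero, one_mul,
      Nat.add_sub_cancel, Nat.sub_zero, add_comm]
    refine congrArg (· + _) (sum_congr rfl fun i hi => ?_)
    rw [← mul_assoc, ← mul_assoc, ← pow_succ', Nat.sub_sub, Nat.add_comm 1 i]

section CharP

variable {R : Type*} [Ring R] {p : ℕ} [CharP R p]

theorem CharP.natCast_choose_sub_one (hp : p.Prime) {k : ℕ} (hk : k < p) :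
    ((p - 1).choose k : R) = (-1) ^ k := by
  induction k with
  | zero => simp
  | succ k ih =>
    have pascal : (p - 1).choose k + (p - 1).choose (k + 1) = p.choose (k + 1) := by
      conv_rhs => rw [← Nat.sub_one_add_one hp.ne_zero, Nat.choose_succ_succ']
    have hvanish : (p.choose (k + 1) : R) = 0 :=
      (CharP.cast_eq_zero_iff R p _).2 (hp.dvd_choose_self k.succ_ne_zero hk)
    rw [← pascal, Nat.cast_add, ih (by omega)] at hvanish
    rw [eq_neg_of_add_eq_zero_right hvanish, pow_succ, mul_neg_one]

theorem CharP.neg_one_pow_sub_one (hp : p.Prime) : (-1 : R) ^ (p - 1) = 1 := by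
  have := Fact.mk hp
  calc (-1 : R) ^ (p - 1) = (-1) ^ (p - 1) * (-1) * (-1) := by simp
    _ = 1 := by rw [pow_sub_one_mul hp.ne_zero, neg_one_pow_char]; simp

theorem Commute.sub_pow_sub_one_char (hp : p.Prime) {x y : R} (h : Commute x y) :
    (x - y) ^ (p - 1) = ∑ i ∈ range p, x ^ i * y ^ (p - 1 - i) := by
  rw [sub_eq_add_neg, h.neg_right.add_pow, Nat.sub_one_add_one hp.ne_zero]
  refine sum_congr rfl fun i hi => ?_
  have hi : i < p := mem_range.1 hi
  rw [neg_pow, CharP.natCast_choose_sub_one hp hi, ← mul_assoc, mul_assoc _ (y ^ _),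
    ← ((Commute.neg_one_left _).pow_left i).eq, ← mul_assoc, mul_assoc (x ^ i), ← pow_add,
    Nat.sub_add_cancel (by omega), CharP.neg_one_pow_sub_one hp, mul_one]

theorem sum_pow_mul_mul_pow_eq_iterate_commutator (hp : p.Prime) (x a : R) :
    ∑ i ∈ range p, x ^ i * a * x ^ (p - 1 - i) = (fun y => x * y - y * x)^[p - 1] a := by
  have := charP_of_injective_ringHom (Algebra.lmul_injective (R := ℤ) (A := R)) p
  have hsum := LinearMap.congr_fun
    ((LinearMap.commute_mulLeft_right (R := ℤ) x x).sub_pow_sub_one_char hp) a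
  have had : (fun y => x * y - y * x) =
      ⇑(LinearMap.mulLeft ℤ x - LinearMap.mulRight ℤ x) := rfl
  rw [had, ← Module.End.coe_pow, hsum]
  simp [LinearMap.sum_apply, LinearMap.pow_mulLeft, LinearMap.pow_mulRight, mul_assoc]

theorem Polynomial.eq_of_derivative_eq_C (hp : p.Prime) {P : R[X]} {c : R}
    (hdeg : P.natDegree ≤ p) (hP : derivative P = C c) :
    P = C (P.coeff p) * X ^ p + C c * X + C (P.coeff 0) := by
  ext n
  have hp2 := hp.two_le
  have hcoeff := congr_arg (coeff · (n - 1)) hP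
  simp only [coeff_derivative, coeff_C] at hcoeff
  simp only [coeff_add, coeff_C_mul, coeff_X_pow, coeff_X, coeff_C, mul_ite, mul_one, mul_zero]
  obtain rfl | rfl | ⟨h1, hn⟩ | rfl | hn :
      n = 0 ∨ n = 1 ∨ (1 < n ∧ n < p) ∨ n = p ∨ p < n := by omega
  · simp [hp.ne_zero.symm]
  · simpa [hp.one_lt.ne] using hcoeff
  · have hunit : IsUnit ((n - 1 : ℕ) + 1 : R) := by
      rw [← Nat.cast_succ, CharP.isUnit_natCast_iff hp]
      exact Nat.not_dvd_of_pos_of_lt (by omega) (by omega)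
    rw [if_neg (by omega), hunit.mul_left_eq_zero, Nat.sub_add_cancel h1.le] at hcoeff
    have hn0 : n ≠ 0 := by omega
    simp [hcoeff, hn.ne, h1.ne, hn0]
  · simp [hp.one_lt.ne, hp.ne_zero]
  · rw [coeff_eq_zero_of_natDegree_lt (hdeg.trans_lt hn)]
    have hn0 : n ≠ 0 := by omega
    have hn1 : 1 ≠ n := by omega
    simp [hn.ne', hn0, hn1]

theorem add_pow_char_of_commute_iterate_commutator (hp : p.Prime) (a b : R)
    (h : ∀ n, Commute a ((fun y => b * y - y * b)^[n] a)) :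
    (a + b) ^ p = a ^ p + b ^ p + (fun y => b * y - y * b)^[p - 1] a := by
  set F : R[X] := C a * X + C b
  have hadF : ∀ n, (fun y => F * y - y * F)^[n] (C a) = C ((fun y => b * y - y * b)^[n] a) := by
    intro n
    induction n with
    | zero => rfl
    | succ n ih =>
      rw [Function.iterate_succ_apply', ih, Function.iterate_succ_apply']
      simp only [F, add_mul, mul_add, mul_assoc, X_mul_C, ← mul_assoc (C _) (C _), ← C_mul,
        (h n).eq]
      simp only [C_sub, C_mul]
      abel
  have hderiv : derivative (F ^ p) = C ((fun y => b * y - y * b)^[p - 1] a) := by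
    rw [derivative_pow_eq_sum, show derivative F = C a by simp [F],
      sum_pow_mul_mul_pow_eq_iterate_commutator hp, hadF]
  have hdeg : (F ^ p).natDegree ≤ p := by
    simpa using natDegree_pow_le_of_le p natDegree_linear_le
  have htop : (F ^ p).coeff p = a ^ p := by
    simpa [F] using coeff_pow_of_natDegree_le (m := p) (natDegree_linear_le (a := a) (b := b))
  have hbot : (F ^ p).coeff 0 = b ^ p := by
    rw [← constantCoeff_apply, map_pow, constantCoeff_apply]
    simp [F]
  have hF := eq_of_derivative_eq_C hp hdeg hderiv
  rw [htop, hbot] at hF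
  have hψ := congrArg (eval₂RingHom' (RingHom.id R) 1 fun _ => Commute.one_right _) hF
  simp only [map_add, map_mul, map_pow] at hψ
  simpa [F, add_right_comm] using hψ

end CharP

section Derivation

variable {A : Type*} [CommRing A] (D : A → A)

theorem iterate_mul_eq_mul_iterate_add_mul (hleib : ∀ u v, D (u * v) = u * D v + v * D u)
    {g h : A} (hg : D g = g * h) (n : ℕ) (x : A) :
    D^[n] (g * x) = g * (fun y => h * y + D y)^[n] x := by
  induction n generalizing x with
  | zero => rfl
  | succ n ih =>
    rw [Function.iterate_succ_apply, Function.iterate_succ_apply, ← ih, hleib, hg]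
    ring_nf

theorem iterate_commutator_toAddMonoidEnd (δ : AddMonoid.End A)
    (hleib : ∀ u v, δ (u * v) = u * δ v + v * δ u) (c : A) (n : ℕ) :
    (fun T => δ * T - T * δ)^[n] (Module.toAddMonoidEnd A A c) =
      Module.toAddMonoidEnd A A (δ^[n] c) := by
  induction n with
  | zero => rfl
  | succ n ih =>
    rw [Function.iterate_succ_apply', ih, Function.iterate_succ_apply']
    ext x
    change δ (δ^[n] c * x) - δ^[n] c * δ x = δ (δ^[n] c) * x
    rw [hleib]
    ring

theorem iterate_mul_add_one_char {p : ℕ} [CharP A p] (hp : p.Prime)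
    (hadd : ∀ u v, D (u + v) = D u + D v) (hleib : ∀ u v, D (u * v) = u * D v + v * D u)
    (h : A) : (fun y => h * y + D y)^[p] 1 = h ^ p + D^[p - 1] h := by
  set δ : AddMonoid.End A := AddMonoidHom.mk' D hadd
  set μ := Module.toAddMonoidEnd A A
  have : CharP (AddMonoid.End A) p := charP_of_injective_ringHom (f := μ)
    (fun c c' hc => by simpa using (congr($hc 1) : c * 1 = c' * 1)) p
  have hjac := add_pow_char_of_commute_iterate_commutator hp (μ h) δ fun n => by
    rw [iterate_commutator_toAddMonoidEnd δ hleib]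
    exact (Commute.all _ _).map μ
  rw [iterate_commutator_toAddMonoidEnd δ hleib, ← map_pow] at hjac
  have hD1 : D^[p] 1 = 0 := by
    rw [← Nat.sub_one_add_one hp.ne_zero, Function.iterate_succ_apply,
      (by simpa using hleib 1 1 : D 1 = 0)]
    exact iterate_map_zero δ _
  calc (fun y => h * y + D y)^[p] 1 = h ^ p * 1 + D^[p] 1 + D^[p - 1] h * 1 := congr($hjac 1)
    _ = h ^ p + D^[p - 1] h := by rw [hD1, mul_one, mul_one, add_zero]

end Derivation

/-- Let `p` be a prime, `K` a field of characteristic `p`, `D` a derivation on `K`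
(an additive map satisfying the Leibniz rule), and `g ∈ K` nonzero. Then the logarithmic
derivative `h = D(g)/g` satisfies `D^{p-1}(h) + h^p = D^p(g)/g`. In particular, if
`D^p = 0`, every logarithmic derivative is a solution of the homogeneous `p`-Riccati
equation `D^{p-1}(f) + f^p = 0`. -/
theorem logDeriv_pRiccati
    (p : ℕ) (hp : p.Prime) (K : Type*) [Field K] [CharP K p]
    (D : K → K)
    (hadd : ∀ u v : K, D (u + v) = D u + D v)
    (hleib : ∀ u v : K, D (u * v) = u * D v + v * D u)
    (g : K) (hg : g ≠ 0) :
    D^[p - 1] (D g / g) + (D g / g) ^ p = D^[p] g / g ∧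
      ((∀ a : K, D^[p] a = 0) → D^[p - 1] (D g / g) + (D g / g) ^ p = 0) := by
  have hconj := iterate_mul_eq_mul_iterate_add_mul D hleib (mul_div_cancel₀ (D g) hg).symm p 1
  rw [mul_one, iterate_mul_add_one_char D hp hadd hleib] at hconj
  have key : D^[p - 1] (D g / g) + (D g / g) ^ p = D^[p] g / g := by
    rw [hconj, mul_div_cancel_left₀ _ hg, add_comm]
  exact ⟨key, fun hDp => by rw [key, hDp, zero_div]⟩
end

section
/- Let p be a prime and K a finite separable field extension of the rational function field F_p(x). Let D be a derivation on K such that D(x) = 1, where x denotes the image in K of the variable of F_p(x) (D is then the unique extension to K of the derivation d/dx). Let v be a normalized additive discrete valuation on K admitting a uniformizer t ∈ K with v(D(t)) = 0 (this holds at every finite unramified place of K), and let y ∈ K with v(y) ≥ 0 (i.e., the place is not a pole of y). Then every solution f ∈ K of the p-Riccati equation D^{p-1}(f) + f^p = y satisfies v(f) ≥ −1, i.e., f has at most a simple pole at this place. -/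
/-!
Write `Kᵖ` for the subfield of `p`-th powers. Since `K` is separable over `𝔽_p(x)`, it equals
`Kᵖ(x)`, so `[K : Kᵖ] ≤ p`. The powers `1, t, …, t^(p-1)` of a uniformizer have valuations that
are pairwise distinct modulo `p` even after multiplication by nonzero elements of `Kᵖ`, so they
are `Kᵖ`-linearly independent, hence a `Kᵖ`-basis of `K`, and the valuation of
`a = ∑ cᵢ tⁱ` is the minimum of the valuations of its terms. As `D` kills `Kᵖ` and
`D(tⁱ) = i tⁱ⁻¹ D(t)` with `v(D t) ≥ 0`, this gives `v(D a) ≥ v(a) - 1`, and so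
`v(D^{p-1} f) ≥ v(f) - (p - 1)`. If `v(f) = m ≤ -2`, then `v(f^p) = p m < v(y)` forces
`v(D^{p-1} f) = p m`, and `p m ≥ m - (p - 1)` gives `m ≥ -1`.
-/

open IntermediateField Module Polynomial

theorem AddValuation.map_sum_eq_of_lt {R Γ : Type*} [Ring R] [LinearOrderedAddCommMonoidWithTop Γ]
    (v : AddValuation R Γ) {ι : Type*} [DecidableEq ι] {s : Finset ι} {f : ι → R} {j : ι}
    (hj : j ∈ s) (hf : ∀ i ∈ s \ {j}, v (f j) < v (f i)) :
    v (∑ i ∈ s, f i) = v (f j) :=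
  Valuation.map_sum_eq_of_lt (AddValuation.toValuation v) hj hf

theorem AddValuation.map_sum_le_of_injOn {K Γ : Type*} [Field K]
    [LinearOrderedAddCommMonoidWithTop Γ] [Nontrivial Γ]
    (v : AddValuation K Γ) {ι : Type*} [Fintype ι] {g : ι → K}
    (hg : Set.InjOn (fun i => v (g i)) {i | g i ≠ 0}) (i : ι) : v (∑ j, g j) ≤ v (g i) := by
  classical
  by_cases hi : g i = 0
  · simp [hi]
  set s := Finset.univ.filter (g · ≠ 0)
  obtain ⟨j, hj, hmin⟩ := s.exists_min_image (fun k => v (g k)) ⟨i, by simpa [s] using hi⟩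
  have hlt : ∀ k ∈ s \ {j}, v (g j) < v (g k) := by
    intro k hk
    obtain ⟨hks, hkj⟩ := Finset.mem_sdiff.1 hk
    refine (hmin k hks).lt_of_ne fun h => ?_
    exact Finset.notMem_singleton.1 hkj (hg (by simpa [s] using hks) (by simpa [s] using hj) h.symm)
  rw [← Finset.sum_filter_ne_zero, AddValuation.map_sum_eq_of_lt v hj hlt]
  exact hmin i (by simpa [s] using hi)

theorem AddValuation.le_map_nsmul {R Γ : Type*} [Ring R] [LinearOrderedAddCommMonoidWithTop Γ]
    (v : AddValuation R Γ) (n : ℕ) (x : R) : v x ≤ v (n • x) := by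
  simpa using AddValuation.map_le_sum v (s := Finset.range n) (f := fun _ => x) fun _ _ => le_rfl

theorem Derivation.map_pow_char {R A : Type*} [CommSemiring R] [CommRing A] [Algebra R A]
    (p : ℕ) [CharP A p] (D : Derivation R A A) (a : A) : D (a ^ p) = 0 := by
  rw [D.leibniz_pow, nsmul_eq_mul, CharP.cast_eq_zero, zero_mul]

section PBasis

variable (p : ℕ) [hp : Fact p.Prime]

theorem RatFunc.eq_top_of_X_mem {T : Subfield (RatFunc (ZMod p))} (hX : RatFunc.X ∈ T) :
    T = ⊤ := by
  let E : IntermediateField (ZMod p) (RatFunc (ZMod p)) :=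
    T.toIntermediateField fun c => by
      rw [← ZMod.natCast_zmod_val c, map_natCast]
      exact natCast_mem T _
  have hE : E = ⊤ := top_le_iff.1 (RatFunc.adjoin_X (K := ZMod p) ▸ adjoin_simple_le_iff.2 hX)
  exact eq_top_iff.2 fun r _ => (hE ▸ mem_top : r ∈ E)

variable (K : Type*) [Field K] [CharP K p]

theorem isIntegral_frobenius_fieldRange (a : K) : IsIntegral (frobenius K p).fieldRange a :=
  .of_pow hp.out.pos (isIntegral_algebraMap (x := (⟨a ^ p, a, rfl⟩ : (frobenius K p).fieldRange)))

variable [Algebra (RatFunc (ZMod p)) K] [Algebra.IsSeparable (RatFunc (ZMod p)) K]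

/-- `K` is separable and purely inseparable over the compositum of `𝔽_p(x)` and `Kᵖ`. -/
theorem adjoin_frobenius_fieldRange_X_eq_top :
    (frobenius K p).fieldRange⟮algebraMap (RatFunc (ZMod p)) K RatFunc.X⟯ = ⊤ := by
  set E := (frobenius K p).fieldRange⟮algebraMap (RatFunc (ZMod p)) K RatFunc.X⟯
  have hF : ∀ r, algebraMap (RatFunc (ZMod p)) K r ∈ E.toSubfield := by
    have := RatFunc.eq_top_of_X_mem p (T := E.toSubfield.comap (algebraMap _ K))
      (mem_adjoin_simple_self _ _)
    exact fun r => (this ▸ Subfield.mem_top r : r ∈ E.toSubfield.comap _)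
  let E' := E.toSubfield.toIntermediateField hF
  have : Algebra.IsSeparable E' K :=
    Algebra.isSeparable_tower_top_of_isSeparable (RatFunc (ZMod p)) E' K
  have : IsPurelyInseparable E' K := (isPurelyInseparable_iff_pow_mem E' p).2 fun b =>
    ⟨1, ⟨⟨b ^ p, E.algebraMap_mem ⟨b ^ p, b, rfl⟩⟩, by simp⟩⟩
  exact eq_top_iff.2 fun b _ => by
    obtain ⟨c, rfl⟩ := IsPurelyInseparable.surjective_algebraMap_of_isSeparable E' K b
    exact c.2

instance : FiniteDimensional (frobenius K p).fieldRange K := by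
  have := adjoin.finiteDimensional
    (isIntegral_frobenius_fieldRange p K (algebraMap (RatFunc (ZMod p)) K RatFunc.X))
  rw [adjoin_frobenius_fieldRange_X_eq_top] at this
  exact topEquiv.toLinearEquiv.finiteDimensional

theorem finrank_frobenius_fieldRange_le : finrank (frobenius K p).fieldRange K ≤ p := by
  set x := algebraMap (RatFunc (ZMod p)) K RatFunc.X
  have hx := isIntegral_frobenius_fieldRange p K x
  have h := adjoin.finrank hx
  rw [adjoin_frobenius_fieldRange_X_eq_top, finrank_top'] at h
  rw [h, ← Nat.cast_le (α := WithBot ℕ), ← degree_eq_natDegree (minpoly.ne_zero hx),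
    ← degree_X_pow_sub_C hp.out.pos (⟨x ^ p, x, rfl⟩ : (frobenius K p).fieldRange)]
  exact minpoly.degree_le_of_ne_zero _ _ (X_pow_sub_C_ne_zero hp.out.pos _)
    (by simp only [aeval_sub, map_pow, aeval_X, aeval_C]; exact sub_self _)

end PBasis

section Uniformizer

variable {p : ℕ} [hp : Fact p.Prime] {K : Type*} [Field K] [CharP K p]
  (v : AddValuation K (WithTop ℤ)) {t : K}

theorem exists_valuation_smul_pow (ht : v t = 1) {c : (frobenius K p).fieldRange} (hc : c ≠ 0)
    (i : ℕ) : ∃ m : ℤ, v (c • t ^ i) = ((p * m + i : ℤ) : WithTop ℤ) := by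
  obtain ⟨b, hb⟩ := c.2
  obtain ⟨m, hm⟩ := WithTop.ne_top_iff_exists.1 <| (v.ne_top_iff).2 fun h : b = 0 => hc <| by
    ext; simp [← hb, h]
  refine ⟨m, ?_⟩
  rw [Subfield.smul_def, smul_eq_mul, ← hb, frobenius_def, v.map_mul, v.map_pow, v.map_pow, ← hm,
    ht]
  norm_cast
  simp

theorem injOn_valuation_smul_pow (ht : v t = 1) (c : Fin p → (frobenius K p).fieldRange) :
    Set.InjOn (fun i => v (c i • t ^ (i : ℕ))) {i | c i • t ^ (i : ℕ) ≠ 0} := by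
  intro i hi j hj hij
  obtain ⟨m, hm⟩ := exists_valuation_smul_pow v ht (left_ne_zero_of_smul hi) i
  obtain ⟨n, hn⟩ := exists_valuation_smul_pow v ht (left_ne_zero_of_smul hj) j
  have h : (p * m + i : ℤ) = p * n + j := WithTop.coe_injective <| hm.symm.trans <| hij.trans hn
  have := congrArg (· % (p : ℤ)) h
  simp only [Int.mul_add_emod_self_left, Int.emod_eq_of_lt, Nat.cast_nonneg, Nat.cast_lt, i.2, j.2,
    Nat.cast_inj] at this
  exact Fin.ext this

theorem linearIndependent_pow_of_valuation_eq_one (ht : v t = 1) :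
    LinearIndependent (frobenius K p).fieldRange fun i : Fin p => t ^ (i : ℕ) := by
  refine Fintype.linearIndependent_iff.2 fun c hc i => ?_
  have hi := AddValuation.map_sum_le_of_injOn v (injOn_valuation_smul_pow v ht c) i
  rw [hc, v.map_zero, top_le_iff, v.top_iff, smul_eq_zero] at hi
  exact hi.resolve_right <| pow_ne_zero _ <| (v.ne_top_iff).1 <| by simp [ht]

theorem span_pow_eq_top_of_valuation_eq_one [Algebra (RatFunc (ZMod p)) K]
    [Algebra.IsSeparable (RatFunc (ZMod p)) K] (ht : v t = 1) :
    Submodule.span (frobenius K p).fieldRange (Set.range fun i : Fin p => t ^ (i : ℕ)) = ⊤ :=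
  have hind := linearIndependent_pow_of_valuation_eq_one v ht
  hind.span_eq_top_of_card_eq_finrank' <| le_antisymm hind.fintype_card_le_finrank
    (by simpa using finrank_frobenius_fieldRange_le p K)

variable (δ : Derivation ℤ K K)

theorem valuation_smul_pow_le_derivation (ht : v t = 1) (htδ : 0 ≤ v (δ t))
    (c : (frobenius K p).fieldRange) (i : ℕ) : v (c • t ^ i) ≤ v (δ (c • t ^ i)) + 1 := by
  obtain ⟨b, hb⟩ := c.2
  have hδ : δ (c • t ^ i) = b ^ p * δ (t ^ i) := by
    rw [Subfield.smul_def, smul_eq_mul, ← hb, frobenius_def, δ.leibniz, δ.map_pow_char p,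
      smul_zero, add_zero, smul_eq_mul]
  rw [hδ, Subfield.smul_def, smul_eq_mul, ← hb, frobenius_def]
  cases i with
  | zero => simp [δ.map_one_eq_zero]
  | succ k =>
    rw [δ.leibniz_pow, add_tsub_cancel_right, pow_succ, ← mul_assoc, v.map_mul, ht, v.map_mul,
      v.map_mul]
    gcongr
    calc v (t ^ k) ≤ v (t ^ k) + v (δ t) := le_add_of_nonneg_right htδ
      _ = v (t ^ k • δ t) := by rw [smul_eq_mul, v.map_mul]
      _ ≤ _ := AddValuation.le_map_nsmul v _ _

variable (hspan :
  Submodule.span (frobenius K p).fieldRange (Set.range fun i : Fin p => t ^ (i : ℕ)) = ⊤)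
include hspan

theorem valuation_le_derivation_add_one (ht : v t = 1) (htδ : 0 ≤ v (δ t)) (a : K) :
    v a ≤ v (δ a) + 1 := by
  obtain ⟨c, rfl⟩ :=
    (Submodule.mem_span_range_iff_exists_fun _).1 (hspan ▸ Submodule.mem_top : a ∈ _)
  have : Nonempty (Fin p) := ⟨⟨0, hp.out.pos⟩⟩
  obtain ⟨j, -, hj⟩ := Finset.univ.exists_min_image (fun i => v (δ (c i • t ^ (i : ℕ))))
    Finset.univ_nonempty
  calc v (∑ i, c i • t ^ (i : ℕ)) ≤ v (c j • t ^ (j : ℕ)) :=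
        AddValuation.map_sum_le_of_injOn v (injOn_valuation_smul_pow v ht c) j
    _ ≤ v (δ (c j • t ^ (j : ℕ))) + 1 := valuation_smul_pow_le_derivation v δ ht htδ _ _
    _ ≤ v (δ (∑ i, c i • t ^ (i : ℕ))) + 1 := by
        rw [map_sum]
        gcongr
        exact AddValuation.map_le_sum v fun i _ => hj i (Finset.mem_univ i)

theorem valuation_le_iterate_derivation_add (ht : v t = 1) (htδ : 0 ≤ v (δ t)) (a : K)
    (k : ℕ) : v a ≤ v (δ^[k] a) + k := by
  induction k with
  | zero => simp
  | succ k ih =>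
    calc v a ≤ v (δ^[k] a) + k := ih
      _ ≤ v (δ^[k + 1] a) + 1 + k := by
        rw [Function.iterate_succ_apply']
        gcongr
        exact valuation_le_derivation_add_one v δ hspan ht htδ _
      _ = v (δ^[k + 1] a) + (k + 1 : ℕ) := by push_cast; abel

theorem neg_one_le_valuation_of_pRiccati (ht : v t = 1) (htδ : 0 ≤ v (δ t)) {y f : K}
    (hy : 0 ≤ v y) (hric : δ^[p - 1] f + f ^ p = y) : -1 ≤ v f := by
  by_contra! hf
  obtain ⟨m, hm⟩ := WithTop.ne_top_iff_exists.1 (hf.trans (WithTop.coe_lt_top (-1))).ne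
  rw [← hm] at hf
  have hm1 : m < -1 := WithTop.coe_lt_coe.1 hf
  have hp2 : 2 ≤ p := hp.out.two_le
  have hfp : v (f ^ p) = ((p * m : ℤ) : WithTop ℤ) := by
    rw [AddValuation.map_pow, ← hm]; norm_cast
  have hlt : v (f ^ p) < v y := by
    refine lt_of_lt_of_le ?_ hy
    rw [hfp]
    exact_mod_cast (by nlinarith : p * m < 0)
  have hδf : v (δ^[p - 1] f) = v (f ^ p) := by
    rw [eq_sub_of_add_eq hric]
    exact AddValuation.map_sub_eq_of_lt_right v hlt
  have := valuation_le_iterate_derivation_add v δ hspan ht htδ f (p - 1)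
  rw [hδf, hfp, ← hm] at this
  have : m ≤ p * m + (p - 1 : ℕ) := by exact_mod_cast this
  push_cast [Nat.cast_sub hp.out.one_le] at this
  nlinarith

end Uniformizer

theorem pRiccati_at_most_simple_pole_general
    (p : ℕ) [Fact p.Prime] (K : Type*) [Field K]
    [Algebra (RatFunc (ZMod p)) K]
    [Algebra.IsSeparable (RatFunc (ZMod p)) K]
    (D : K → K)
    (hadd : ∀ u v : K, D (u + v) = D u + D v)
    (hleib : ∀ u v : K, D (u * v) = u * D v + v * D u)
    (v : K → WithTop ℤ)
    (hv_top : ∀ a : K, v a = ⊤ ↔ a = 0)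
    (hv_mul : ∀ a b : K, v (a * b) = v a + v b)
    (hv_add : ∀ a b : K, min (v a) (v b) ≤ v (a + b))
    (t : K) (ht : v t = 1) (htD : v (D t) = 0)
    (y : K) (hy : 0 ≤ v y)
    (f : K) (hric : D^[p - 1] f + f ^ p = y) :
    (-1 : WithTop ℤ) ≤ v f := by
  have : CharP K p := charP_of_injective_algebraMap (algebraMap (RatFunc (ZMod p)) K).injective p
  have hv1 : v 1 = 0 := by
    obtain ⟨m, hm⟩ := WithTop.ne_top_iff_exists.1 fun h => one_ne_zero ((hv_top 1).1 h)
    have h := hv_mul 1 1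
    rw [mul_one, ← hm, ← WithTop.coe_add, WithTop.coe_inj] at h
    rw [← hm, show m = 0 by omega]
    rfl
  let w : AddValuation K (WithTop ℤ) := .of v ((hv_top 0).2 rfl) hv1 hv_add hv_mul
  let δ : Derivation ℤ K K := .mk' (AddMonoidHom.mk' D hadd).toIntLinearMap hleib
  exact neg_one_le_valuation_of_pRiccati w δ (span_pow_eq_top_of_valuation_eq_one w ht) ht
    htD.ge hy hric

/-- Let `p` be a prime and `K` a finite separable field extension of `𝔽_p(x)`, with `D`
the derivation on `K` extending `d/dx` (an additive map satisfying the Leibniz rule, with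
`D(x) = 1`). Let `v` be a normalized additive discrete valuation on `K` (values in
`ℤ ∪ {∞}`, with `v a = ∞ ↔ a = 0`, multiplicativity, the ultrametric inequality, and
surjectivity onto `ℤ`) admitting a uniformizer `t` with `v(D(t)) = 0` (as at every finite
unramified place of `K`), and let `y ∈ K` with `v(y) ≥ 0`. Then every solution `f ∈ K` of
the `p`-Riccati equation `D^{p-1}(f) + f^p = y` satisfies `v(f) ≥ -1`, i.e. `f` has at
most a simple pole at this place. -/
theorem pRiccati_at_most_simple_pole
    (p : ℕ) [Fact p.Prime] (K : Type*) [Field K]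
    [Algebra (RatFunc (ZMod p)) K]
    [FiniteDimensional (RatFunc (ZMod p)) K]
    [Algebra.IsSeparable (RatFunc (ZMod p)) K]
    (D : K → K)
    (hadd : ∀ u v : K, D (u + v) = D u + D v)
    (hleib : ∀ u v : K, D (u * v) = u * D v + v * D u)
    (hx : D (algebraMap (RatFunc (ZMod p)) K RatFunc.X) = 1)
    (v : K → WithTop ℤ)
    (hv_top : ∀ a : K, v a = ⊤ ↔ a = 0)
    (hv_mul : ∀ a b : K, v (a * b) = v a + v b)
    (hv_add : ∀ a b : K, min (v a) (v b) ≤ v (a + b))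
    (hv_surj : ∀ n : ℤ, ∃ a : K, v a = (n : WithTop ℤ))
    (t : K) (ht : v t = 1) (htD : v (D t) = 0)
    (y : K) (hy : 0 ≤ v y)
    (f : K) (hric : D^[p - 1] f + f ^ p = y) :
    (-1 : WithTop ℤ) ≤ v f :=
  pRiccati_at_most_simple_pole_general p K D hadd hleib v hv_top hv_mul hv_add t ht htD y hy f hric
end
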